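/- arXiv:2602.06978 — 3 statements merged into one kernel-verified Lean document; each statement's English description precedes it below -/
import Mathlib

section
/- Let n ≥ 1, τ > 0, α ∈ (0,1], L ∈ [0,1), and let F : [0,∞) × ℝⁿ × ℝⁿ × ℝⁿ → ℝⁿ be continuous and satisfy ‖F(t, u₁, y₁, v₁) - F(t, u₂, y₂, v₂)‖ ≤ L (‖u₁ - u₂‖ + ‖y₁ - y₂‖ + ‖v₁ - v₂‖) for all arguments. Let φ : [-τ, 0] → ℝⁿ be continuous. Then there exists T > 0 and a unique pair of continuous functions x : [-τ, T] → ℝⁿ and h : [0, T] → ℝⁿ such that x = φ on [-τ, 0], h(t) = F(t, x(t), h(t), x(t-τ)) for all t ∈ [0, T], and x(t) = φ(0) + (1/Γ(α)) ∫₀ᵗ (t-s)^{α-1} h(s) ds for all t ∈ [0, T]. -/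
/-!
Since `L < 1`, the implicit equation `y = F(t, u, y, w)` is solved by a contraction in `y`: its
solution `G(t, u, w)` depends continuously on `(t, u, w)` and is `L / (1 - L)`-Lipschitz in `u`.
For `t ≤ T ≤ τ` the delayed value `x(t - τ) = φ(t - τ)` is known, so the problem reduces to the
Volterra equation `x = φ(0) + I^α[G(·, x, φ(· - τ))]`, with `I^α` the Riemann–Liouville integral.
`I^α` maps continuous functions to `α`-Hölder continuous ones and
`‖I^α f(t)‖ ≤ t^α sup ‖f‖ / Γ(α + 1)`, so the Picard operator is a contraction of `C([0, T])`
once `L / (1 - L) · T^α < Γ(α + 1)`.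
-/

open MeasureTheory Set Real

/-- `(x, h)` is a solution pair of the implicit delayed Caputo fractional
initial value problem `ᶜD^α x(t) = F(t, x(t), ᶜD^α x(t), x(t-τ))` on `[0,T]`
with history `φ`, in integral-equation form: `h` plays the role of the Caputo
derivative of `x`. -/
def IsImplicitSolutionPair {n : ℕ} (T τ α : ℝ)
    (φ : ℝ → EuclideanSpace ℝ (Fin n))
    (F : ℝ → EuclideanSpace ℝ (Fin n) → EuclideanSpace ℝ (Fin n) →
      EuclideanSpace ℝ (Fin n) → EuclideanSpace ℝ (Fin n))
    (x h : ℝ → EuclideanSpace ℝ (Fin n)) : Prop :=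
  ContinuousOn x (Set.Icc (-τ) T) ∧
  ContinuousOn h (Set.Icc (0:ℝ) T) ∧
  (∀ t ∈ Set.Icc (-τ) (0:ℝ), x t = φ t) ∧
  (∀ t ∈ Set.Icc (0:ℝ) T, h t = F t (x t) (h t) (x (t - τ))) ∧
  (∀ t ∈ Set.Icc (0:ℝ) T, x t =
    φ 0 + (Real.Gamma α)⁻¹ •
      ∫ s in Set.Ioc (0:ℝ) t, ((t - s) ^ (α - 1)) • h s)

open Filter Topology
open scoped NNReal

section RiemannLiouville

variable {E : Type*} [NormedAddCommGroup E] [NormedSpace ℝ E] {α a b c t u v M : ℝ}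
  {f g : ℝ → E}

noncomputable def riemannLiouville (α : ℝ) (f : ℝ → E) (t : ℝ) : E :=
  (Gamma α)⁻¹ • ∫ s in Ioc 0 t, (t - s) ^ (α - 1) • f s

lemma integrableOn_rpow_sub (hα : 0 < α) (c a b : ℝ) :
    IntegrableOn (fun s => (c - s) ^ (α - 1)) (Ioc a b) := by
  simpa using ((intervalIntegral.intervalIntegrable_rpow' (a := c - a) (b := c - b)
    (r := α - 1) (by linarith)).comp_sub_left c).1

lemma integral_rpow_sub (hα : 0 < α) (c : ℝ) (hab : a ≤ b) :
    ∫ s in Ioc a b, (c - s) ^ (α - 1) = ((c - a) ^ α - (c - b) ^ α) / α := by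
  rw [← intervalIntegral.integral_of_le hab,
    intervalIntegral.integral_comp_sub_left (fun s => s ^ (α - 1)) c,
    integral_rpow (Or.inl (by linarith))]
  ring_nf

lemma integrableOn_rpow_sub_smul (hα : 0 < α) (c : ℝ) (hf : ContinuousOn f (Icc a b)) :
    IntegrableOn (fun s => (c - s) ^ (α - 1) • f s) (Ioc a b) :=
  (integrableOn_rpow_sub hα c a b).smul_continuousOn_of_subset hf measurableSet_Ioc
    isCompact_Icc Ioc_subset_Icc_self

lemma norm_integral_rpow_sub_smul_le (hα : 0 < α) (hab : a ≤ b) (hbc : b ≤ c)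
    (hM : ∀ s ∈ Ioc a b, ‖f s‖ ≤ M) :
    ‖∫ s in Ioc a b, (c - s) ^ (α - 1) • f s‖ ≤ M * (((c - a) ^ α - (c - b) ^ α) / α) := by
  rw [← integral_rpow_sub hα c hab, ← integral_const_mul]
  refine norm_integral_le_of_norm_le ((integrableOn_rpow_sub hα c a b).const_mul M)
    (ae_restrict_of_forall_mem measurableSet_Ioc fun s hs => ?_)
  have hk : 0 ≤ (c - s) ^ (α - 1) := rpow_nonneg (by linarith [hs.2]) _
  rw [norm_smul, norm_of_nonneg hk, mul_comm M]
  exact mul_le_mul_of_nonneg_left (hM s hs) hk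

/-- For `α ≤ 1` the kernel difference has constant sign on `(0, u)`, so its absolute integral
can be computed exactly. -/
lemma norm_integral_rpow_sub_sub_smul_le (hα : α ∈ Ioc 0 1) (hu : 0 ≤ u) (huv : u ≤ v)
    (hM : ∀ s ∈ Ioc 0 u, ‖f s‖ ≤ M) :
    ‖∫ s in Ioc 0 u, ((v - s) ^ (α - 1) - (u - s) ^ (α - 1)) • f s‖ ≤
      M * ((u ^ α - v ^ α + (v - u) ^ α) / α) := by
  have hint : ∫ s in Ioc 0 u, ((u - s) ^ (α - 1) - (v - s) ^ (α - 1)) =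
      (u ^ α - v ^ α + (v - u) ^ α) / α := by
    rw [integral_sub (integrableOn_rpow_sub hα.1 u 0 u) (integrableOn_rpow_sub hα.1 v 0 u),
      integral_rpow_sub hα.1 u hu, integral_rpow_sub hα.1 v hu, sub_self,
      zero_rpow hα.1.ne']
    ring_nf
  rw [← hint, ← integral_const_mul, integral_Ioc_eq_integral_Ioo,
    integral_Ioc_eq_integral_Ioo]
  refine norm_integral_le_of_norm_le
    ((((integrableOn_rpow_sub hα.1 u 0 u).sub
      (integrableOn_rpow_sub hα.1 v 0 u)).mono_set Ioo_subset_Ioc_self).const_mul M)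
    (ae_restrict_of_forall_mem measurableSet_Ioo fun s hs => ?_)
  have hmono : (v - s) ^ (α - 1) ≤ (u - s) ^ (α - 1) :=
    rpow_le_rpow_of_nonpos (by linarith [hs.2]) (by linarith) (by linarith [hα.2])
  rw [norm_smul, norm_of_nonpos (by linarith), neg_sub, mul_comm M]
  exact mul_le_mul_of_nonneg_left (hM s (Ioo_subset_Ioc_self hs)) (by linarith)

lemma riemannLiouville_congr (h : EqOn f g (Ioc 0 t)) :
    riemannLiouville α f t = riemannLiouville α g t := by
  rw [riemannLiouville, riemannLiouville, setIntegral_congr_fun measurableSet_Ioc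
    fun s hs => by rw [h hs]]

lemma norm_Gamma_inv_smul_le (hα : 0 < α) {x : E} {C : ℝ} (hx : ‖x‖ ≤ C / α) :
    ‖(Gamma α)⁻¹ • x‖ ≤ C / Gamma (α + 1) := by
  have hΓ := Gamma_pos_of_pos hα
  rw [norm_smul, norm_of_nonneg (inv_nonneg.2 hΓ.le), Gamma_add_one hα.ne', mul_comm α,
    ← div_div, div_eq_inv_mul _ (Gamma α), mul_div_assoc]
  exact mul_le_mul_of_nonneg_left hx (inv_nonneg.2 hΓ.le)

lemma norm_riemannLiouville_sub_le (hα : 0 < α) (ht : 0 ≤ t) (hf : ContinuousOn f (Icc 0 t))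
    (hg : ContinuousOn g (Icc 0 t)) (hM : ∀ s ∈ Ioc 0 t, ‖f s - g s‖ ≤ M) :
    ‖riemannLiouville α f t - riemannLiouville α g t‖ ≤ M * t ^ α / Gamma (α + 1) := by
  rw [riemannLiouville, riemannLiouville, ← smul_sub,
    ← integral_sub (integrableOn_rpow_sub_smul hα t hf) (integrableOn_rpow_sub_smul hα t hg)]
  refine norm_Gamma_inv_smul_le hα ?_
  simp_rw [← smul_sub]
  simpa [sub_self, zero_rpow hα.ne', mul_div_assoc] using
    norm_integral_rpow_sub_smul_le hα ht le_rfl hM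

lemma norm_riemannLiouville_sub_riemannLiouville_le (hα : α ∈ Ioc 0 1) (hu : 0 ≤ u)
    (huv : u ≤ v) (hf : ContinuousOn f (Icc 0 v)) (hM : ∀ s ∈ Icc 0 v, ‖f s‖ ≤ M) :
    ‖riemannLiouville α f v - riemannLiouville α f u‖ ≤ 2 * M * (v - u) ^ α / Gamma (α + 1) := by
  have hfu : ContinuousOn f (Icc 0 u) := hf.mono (Icc_subset_Icc_right huv)
  have hsplit :
      (∫ s in Ioc 0 v, (v - s) ^ (α - 1) • f s) - ∫ s in Ioc 0 u, (u - s) ^ (α - 1) • f s =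
      (∫ s in Ioc 0 u, ((v - s) ^ (α - 1) - (u - s) ^ (α - 1)) • f s) +
        ∫ s in Ioc u v, (v - s) ^ (α - 1) • f s := by
    simp_rw [sub_smul]
    rw [← Ioc_union_Ioc_eq_Ioc hu huv, setIntegral_union (Ioc_disjoint_Ioc_of_le le_rfl)
      measurableSet_Ioc (integrableOn_rpow_sub_smul hα.1 v hfu)
      (integrableOn_rpow_sub_smul hα.1 v (hf.mono (Icc_subset_Icc_left hu))),
      integral_sub (integrableOn_rpow_sub_smul hα.1 v hfu) (integrableOn_rpow_sub_smul hα.1 u hfu)]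
    abel
  have hnear := norm_integral_rpow_sub_sub_smul_le hα hu huv
    fun s hs => hM s ⟨hs.1.le, hs.2.trans huv⟩
  have hfar := norm_integral_rpow_sub_smul_le hα.1 huv le_rfl
    fun s hs => hM s ⟨hu.trans hs.1.le, hs.2⟩
  have hM0 : 0 ≤ M := (norm_nonneg _).trans (hM v ⟨hu.trans huv, le_rfl⟩)
  have hpow : u ^ α ≤ v ^ α := rpow_le_rpow hu huv hα.1.le
  rw [riemannLiouville, riemannLiouville, ← smul_sub, hsplit]
  refine norm_Gamma_inv_smul_le hα.1 ((norm_add_le _ _).trans ?_)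
  rw [sub_self, zero_rpow hα.1.ne', sub_zero] at hfar
  calc _ ≤ M * ((u ^ α - v ^ α + (v - u) ^ α) / α) + M * ((v - u) ^ α / α) := add_le_add hnear hfar
    _ = M * (u ^ α - v ^ α + 2 * (v - u) ^ α) / α := by ring
    _ ≤ M * (2 * (v - u) ^ α) / α := by
      gcongr
      · exact hα.1.le
      · linarith
    _ = 2 * M * (v - u) ^ α / α := by ring

lemma continuousOn_riemannLiouville (hα : α ∈ Ioc 0 1) {T : ℝ} (hf : ContinuousOn f (Icc 0 T)) :
    ContinuousOn (riemannLiouville α f) (Icc 0 T) := by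
  obtain ⟨M, hM⟩ := isCompact_Icc.exists_bound_of_continuousOn hf
  have hbound : ∀ u ∈ Icc 0 T, ∀ v ∈ Icc 0 T,
      dist (riemannLiouville α f u) (riemannLiouville α f v) ≤
        2 * M * |u - v| ^ α / Gamma (α + 1) := by
    intro u hu v hv
    rcases le_total u v with huv | hvu
    · rw [dist_comm, dist_eq_norm, abs_sub_comm, abs_of_nonneg (sub_nonneg.2 huv)]
      exact norm_riemannLiouville_sub_riemannLiouville_le hα hu.1 huv
        (hf.mono (Icc_subset_Icc_right hv.2)) fun s hs => hM s ⟨hs.1, hs.2.trans hv.2⟩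
    · rw [dist_eq_norm, abs_of_nonneg (sub_nonneg.2 hvu)]
      exact norm_riemannLiouville_sub_riemannLiouville_le hα hv.1 hvu
        (hf.mono (Icc_subset_Icc_right hu.2)) fun s hs => hM s ⟨hs.1, hs.2.trans hu.2⟩
  intro u hu
  rw [ContinuousWithinAt, tendsto_iff_dist_tendsto_zero]
  refine squeeze_zero' (Eventually.of_forall fun _ => dist_nonneg)
    (eventually_nhdsWithin_of_forall fun v hv => hbound v hv u hu) ?_
  have hcont : Continuous fun v : ℝ => 2 * M * |v - u| ^ α / Gamma (α + 1) := by
    fun_prop (disch := exact hα.1.le)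
  simpa [zero_rpow hα.1.ne'] using (hcont.tendsto u).mono_left nhdsWithin_le_nhds

end RiemannLiouville

theorem ContractingWith.continuous_fixedPoint {P X : Type*} [TopologicalSpace P] [MetricSpace X]
    [Nonempty X] [CompleteSpace X] {K : ℝ≥0} {f : P → X → X} (hf : ∀ p, ContractingWith K (f p))
    (hfc : Continuous (Function.uncurry f)) :
    Continuous fun p => (hf p).fixedPoint (f p) := by
  refine continuous_iff_continuousAt.2 fun p => ?_
  set x := (hf p).fixedPoint (f p)
  have hfx : Tendsto (fun q => f q x) (𝓝 p) (𝓝 x) :=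
    (show Continuous fun q => f q x from hfc.comp (continuous_id.prodMk continuous_const)).tendsto'
      p x (hf p).fixedPoint_isFixedPt
  rw [ContinuousAt, tendsto_iff_dist_tendsto_zero]
  refine squeeze_zero (fun _ => dist_nonneg) (fun q => ?_) (by
    simpa using ((tendsto_iff_dist_tendsto_zero.1 hfx).div_const (1 - (K : ℝ))))
  rw [dist_comm, dist_comm (f q x)]
  exact (hf q).dist_fixedPoint_le x

section ImplicitEquation

variable {E : Type*} [NormedAddCommGroup E] [CompleteSpace E] {F : ℝ → E → E → E → E} {L : ℝ}

theorem exists_continuous_implicit_solution (hL : L ∈ Ico 0 1)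
    (hFc : ContinuousOn (fun p : ℝ × E × E × E => F p.1 p.2.1 p.2.2.1 p.2.2.2)
      (Ici 0 ×ˢ (univ ×ˢ (univ ×ˢ univ))))
    (hFL : ∀ t ∈ Ici (0:ℝ), ∀ u₁ y₁ v₁ u₂ y₂ v₂,
      ‖F t u₁ y₁ v₁ - F t u₂ y₂ v₂‖ ≤ L * (‖u₁ - u₂‖ + ‖y₁ - y₂‖ + ‖v₁ - v₂‖)) :
    ∃ G : ℝ × E × E → E, Continuous G ∧
      (∀ t ≥ 0, ∀ u y w, y = F t u y w ↔ y = G (t, u, w)) ∧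
      ∀ t u₁ u₂ w, ‖G (t, u₁, w) - G (t, u₂, w)‖ ≤ L / (1 - L) * ‖u₁ - u₂‖ := by
  -- clamping the time makes the family of maps defined, and continuous, for all `t`
  set f : ℝ × E × E → E → E := fun p y => F (max p.1 0) p.2.1 y p.2.2
  have hfL : ∀ p y₁ y₂, dist (f p y₁) (f p y₂) ≤ L * dist y₁ y₂ := fun p y₁ y₂ => by
    simpa [dist_eq_norm] using hFL _ (le_max_right p.1 0) p.2.1 y₁ p.2.2 p.2.1 y₂ p.2.2
  have hf : ∀ p, ContractingWith L.toNNReal (f p) := fun p =>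
    ⟨by simpa using hL.2, LipschitzWith.of_dist_le_mul fun y₁ y₂ => by
      simpa [hL.1] using hfL p y₁ y₂⟩
  have hfc : Continuous (Function.uncurry f) :=
    hFc.comp_continuous (f := fun q : (ℝ × E × E) × E => (max q.1.1 0, q.1.2.1, q.2, q.1.2.2))
      (by fun_prop) fun q => ⟨le_max_right q.1.1 0, trivial, trivial, trivial⟩
  refine ⟨fun p => (hf p).fixedPoint (f p), ContractingWith.continuous_fixedPoint hf hfc,
    fun t ht u y w => ?_, fun t u₁ u₂ w => ?_⟩
  · have hfix : y = F t u y w ↔ Function.IsFixedPt (f (t, u, w)) y := by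
      simp [Function.IsFixedPt, f, max_eq_left ht, eq_comm]
    rw [hfix]
    exact ⟨(hf _).fixedPoint_unique, fun hy => hy ▸ (hf _).fixedPoint_isFixedPt⟩
  · have := (hf (t, u₁, w)).fixedPoint_lipschitz_in_map (hf (t, u₂, w)) (C := L * ‖u₁ - u₂‖)
      fun y => by simpa [dist_eq_norm] using hFL _ (le_max_right t 0) u₁ y w u₂ y w
    rw [← dist_eq_norm, div_mul_eq_mul_div]
    simpa [hL.1] using this

end ImplicitEquation

lemma ContinuousOn.uncurry_comp_prodMk {X Y Z : Type*} [TopologicalSpace X] [TopologicalSpace Y]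
    [TopologicalSpace Z] {g : X → Y → Z} {s : Set X}
    (hg : ContinuousOn (Function.uncurry g) (s ×ˢ univ))
    {x : X → Y} (hx : ContinuousOn x s) : ContinuousOn (fun t => g t (x t)) s :=
  hg.comp (continuousOn_id.prodMk hx) fun _ ht => ⟨ht, trivial⟩

section Volterra

variable {E : Type*} [NormedAddCommGroup E] [NormedSpace ℝ E] {α T K D t : ℝ}
  {g : ℝ → E → E} {x₀ : E} {x y : ℝ → E}

noncomputable def volterraMap (α : ℝ) (g : ℝ → E → E) (x₀ : E) (x : ℝ → E) (t : ℝ) : E :=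
  x₀ + riemannLiouville α (fun s => g s (x s)) t

lemma continuousOn_volterraMap (hα : α ∈ Ioc 0 1)
    (hg : ContinuousOn (Function.uncurry g) (Icc 0 T ×ˢ univ)) (hx : ContinuousOn x (Icc 0 T)) :
    ContinuousOn (volterraMap α g x₀ x) (Icc 0 T) :=
  continuousOn_const.add (continuousOn_riemannLiouville hα (hg.uncurry_comp_prodMk hx))

lemma volterraMap_congr (h : EqOn x y (Icc 0 T)) (ht : t ∈ Icc 0 T) :
    volterraMap α g x₀ x t = volterraMap α g x₀ y t := by
  rw [volterraMap, volterraMap,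
    riemannLiouville_congr fun s hs => by rw [h ⟨hs.1.le, hs.2.trans ht.2⟩]]

lemma norm_volterraMap_sub_le (hα : 0 < α)
    (hg : ContinuousOn (Function.uncurry g) (Icc 0 T ×ˢ univ)) (hK : 0 ≤ K)
    (hgK : ∀ t ∈ Icc 0 T, ∀ u₁ u₂, ‖g t u₁ - g t u₂‖ ≤ K * ‖u₁ - u₂‖)
    (hx : ContinuousOn x (Icc 0 T)) (hy : ContinuousOn y (Icc 0 T))
    (hD : ∀ s ∈ Icc 0 T, ‖x s - y s‖ ≤ D) (ht : t ∈ Icc 0 T) :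
    ‖volterraMap α g x₀ x t - volterraMap α g x₀ y t‖ ≤ K * T ^ α / Gamma (α + 1) * D := by
  have hsub : Icc 0 t ⊆ Icc 0 T := Icc_subset_Icc_right ht.2
  have hD0 : 0 ≤ D := (norm_nonneg _).trans (hD t ht)
  rw [volterraMap, volterraMap, add_sub_add_left_eq_sub]
  calc _ ≤ K * D * t ^ α / Gamma (α + 1) :=
        norm_riemannLiouville_sub_le hα ht.1 ((hg.uncurry_comp_prodMk hx).mono hsub)
          ((hg.uncurry_comp_prodMk hy).mono hsub) fun s hs =>
            have hs' : s ∈ Icc 0 T := hsub (Ioc_subset_Icc_self hs)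
            (hgK s hs' _ _).trans (mul_le_mul_of_nonneg_left (hD s hs') hK)
    _ ≤ K * D * T ^ α / Gamma (α + 1) := by
        have htT : t ^ α ≤ T ^ α := rpow_le_rpow ht.1 ht.2 hα.le
        gcongr
    _ = K * T ^ α / Gamma (α + 1) * D := by ring

theorem exists_volterra_solution [CompleteSpace E] (hα : α ∈ Ioc 0 1) (hT : 0 ≤ T)
    (hg : ContinuousOn (Function.uncurry g) (Icc 0 T ×ˢ univ)) (hK : 0 ≤ K)
    (hgK : ∀ t ∈ Icc 0 T, ∀ u₁ u₂, ‖g t u₁ - g t u₂‖ ≤ K * ‖u₁ - u₂‖)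
    (hTK : K * T ^ α < Gamma (α + 1)) (x₀ : E) :
    ∃ x : ℝ → E, ContinuousOn x (Icc 0 T) ∧ (∀ t ∈ Icc 0 T, x t = volterraMap α g x₀ x t) ∧
      ∀ y : ℝ → E, ContinuousOn y (Icc 0 T) → (∀ t ∈ Icc 0 T, y t = volterraMap α g x₀ y t) →
        EqOn y x (Icc 0 T) := by
  let Φ : C(Icc 0 T, E) → C(Icc 0 T, E) := fun X =>
    ⟨(Icc 0 T).domRestrict (volterraMap α g x₀ (IccExtend hT X)),
      (continuousOn_volterraMap hα hg X.continuous.Icc_extend'.continuousOn).domRestrict⟩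
  have hΓ : 0 < Gamma (α + 1) := Gamma_pos_of_pos (by linarith [hα.1])
  have hq : 0 ≤ K * T ^ α / Gamma (α + 1) := div_nonneg (mul_nonneg hK (rpow_nonneg hT α)) hΓ.le
  have hΦ : ContractingWith (K * T ^ α / Gamma (α + 1)).toNNReal Φ := by
    refine ⟨by simpa [div_lt_one hΓ] using hTK, LipschitzWith.of_dist_le_mul fun X Y => ?_⟩
    rw [Real.coe_toNNReal _ hq, ContinuousMap.dist_le (mul_nonneg hq dist_nonneg)]
    intro t
    rw [dist_eq_norm]
    exact norm_volterraMap_sub_le hα.1 hg hK hgK X.continuous.Icc_extend'.continuousOn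
      Y.continuous.Icc_extend'.continuousOn (fun s hs => by
        simpa [IccExtend_of_mem _ _ hs, dist_eq_norm] using
          ContinuousMap.dist_apply_le_dist (f := X) (g := Y) ⟨s, hs⟩) t.2
  set X := hΦ.fixedPoint Φ
  have hX : Φ X = X := hΦ.fixedPoint_isFixedPt
  refine ⟨IccExtend hT X, X.continuous.Icc_extend'.continuousOn, fun t ht => ?_,
    fun y hyc hy => ?_⟩
  · conv_lhs => rw [IccExtend_of_mem _ _ ht, ← hX]
    rfl
  · let Y : C(Icc 0 T, E) := ⟨(Icc 0 T).domRestrict y, hyc.domRestrict⟩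
    have hY : Function.IsFixedPt Φ Y := ContinuousMap.ext fun t => by
      show volterraMap α g x₀ (IccExtend hT Y) t = y t
      rw [hy t t.2]
      exact volterraMap_congr (fun s hs => IccExtend_of_mem _ _ hs) t.2
    intro t ht
    have hYX : Y = X := hΦ.fixedPoint_unique hY
    rw [IccExtend_of_mem _ _ ht, ← hYX]
    rfl

end Volterra

lemma exists_pos_le_mul_rpow_lt {τ α c : ℝ} (hτ : 0 < τ) (hα : 0 < α) (hc : 0 < c) (K : ℝ) :
    ∃ T > 0, T ≤ τ ∧ K * T ^ α < c := by
  have hlim : Tendsto (fun T : ℝ => K * T ^ α) (𝓝[>] 0) (𝓝 0) := by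
    simpa [zero_rpow hα.ne'] using
      (((continuous_rpow_const hα.le).tendsto 0).const_mul K).mono_left nhdsWithin_le_nhds
  obtain ⟨T, hTc, hT⟩ := ((hlim.eventually (gt_mem_nhds hc)).and (Ioo_mem_nhdsGT hτ)).exists
  exact ⟨T, hT.1, hT.2.le, hTc⟩

section SolutionPair

variable {n : ℕ} {τ α T : ℝ} {φ : ℝ → EuclideanSpace ℝ (Fin n)}
  {F : ℝ → EuclideanSpace ℝ (Fin n) → EuclideanSpace ℝ (Fin n) →
    EuclideanSpace ℝ (Fin n) → EuclideanSpace ℝ (Fin n)}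
  {G : ℝ × EuclideanSpace ℝ (Fin n) × EuclideanSpace ℝ (Fin n) → EuclideanSpace ℝ (Fin n)}
  {x h : ℝ → EuclideanSpace ℝ (Fin n)}

lemma continuousOn_uncurry_delayed (hGc : Continuous G) (hφ : ContinuousOn φ (Icc (-τ) 0))
    (hTτ : T ≤ τ) :
    ContinuousOn (Function.uncurry fun t u => G (t, u, φ (t - τ))) (Icc 0 T ×ˢ univ) :=
  hGc.comp_continuousOn (continuousOn_fst.prodMk (continuousOn_snd.prodMk
    (hφ.comp (continuousOn_fst.sub continuousOn_const) fun p hp =>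
      ⟨by linarith [hp.1.1], by linarith [hp.1.2]⟩)))

lemma IsImplicitSolutionPair.eqOn_implicit
    (hG : ∀ t ≥ 0, ∀ u y w, y = F t u y w ↔ y = G (t, u, w)) (hTτ : T ≤ τ)
    (hxh : IsImplicitSolutionPair T τ α φ F x h) :
    EqOn h (fun t => G (t, x t, φ (t - τ))) (Icc 0 T) := fun t ht => by
  rw [← hG t ht.1, ← hxh.2.2.1 (t - τ) ⟨by linarith [ht.1], by linarith [ht.2]⟩]
  exact hxh.2.2.2.1 t ht

lemma IsImplicitSolutionPair.eq_volterraMap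
    (hG : ∀ t ≥ 0, ∀ u y w, y = F t u y w ↔ y = G (t, u, w)) (hTτ : T ≤ τ)
    (hxh : IsImplicitSolutionPair T τ α φ F x h) :
    ∀ t ∈ Icc 0 T, x t = volterraMap α (fun t u => G (t, u, φ (t - τ))) (φ 0) x t := fun t ht =>
  (hxh.2.2.2.2 t ht).trans <| congrArg (φ 0 + ·) <| riemannLiouville_congr fun _ hs =>
    hxh.eqOn_implicit hG hTτ ⟨hs.1.le, hs.2.trans ht.2⟩

lemma isImplicitSolutionPair_of_volterraMap
    (hG : ∀ t ≥ 0, ∀ u y w, y = F t u y w ↔ y = G (t, u, w)) (hGc : Continuous G)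
    (hT : 0 ≤ T) (hTτ : T ≤ τ) (hφ : ContinuousOn φ (Icc (-τ) 0)) (hxc : ContinuousOn x (Icc 0 T))
    (hx : ∀ t ∈ Icc 0 T, x t = volterraMap α (fun t u => G (t, u, φ (t - τ))) (φ 0) x t) :
    IsImplicitSolutionPair T τ α φ F (fun t => if t < 0 then φ t else x t)
      (fun t => G (t, x t, φ (t - τ))) := by
  have hnonneg : ∀ t ∈ Icc 0 T, (if t < 0 then φ t else x t) = x t := fun t ht =>
    if_neg (not_lt.2 ht.1)
  have hhist : ∀ t ∈ Icc (-τ) 0, (if t < 0 then φ t else x t) = φ t := by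
    intro t ht
    rcases ht.2.lt_or_eq with ht0 | rfl
    · exact if_pos ht0
    · simpa [volterraMap, riemannLiouville] using (hnonneg 0 ⟨le_rfl, hT⟩).trans (hx 0 ⟨le_rfl, hT⟩)
  refine ⟨?_, (continuousOn_uncurry_delayed hGc hφ hTτ).uncurry_comp_prodMk hxc, hhist,
    fun t ht => ?_, fun t ht => (hnonneg t ht).trans (hx t ht)⟩
  · rw [← Icc_union_Icc_eq_Icc (by linarith) hT]
    exact (hφ.congr hhist).union_of_isClosed (hxc.congr hnonneg) isClosed_Icc isClosed_Icc
  · dsimp only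
    rw [hnonneg t ht, hhist (t - τ) ⟨by linarith [ht.1], by linarith [ht.2]⟩]
    exact (hG t ht.1 _ _ _).2 rfl

end SolutionPair

theorem exists_unique_implicit_solution_pair_general
    (n : ℕ) (τ α L : ℝ) (hτ : 0 < τ)
    (hα : α ∈ Set.Ioc (0:ℝ) 1) (hL : L ∈ Set.Ico (0:ℝ) 1)
    (F : ℝ → EuclideanSpace ℝ (Fin n) → EuclideanSpace ℝ (Fin n) →
      EuclideanSpace ℝ (Fin n) → EuclideanSpace ℝ (Fin n))
    (hFc : ContinuousOn
      (fun p : ℝ × EuclideanSpace ℝ (Fin n) × EuclideanSpace ℝ (Fin n) ×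
          EuclideanSpace ℝ (Fin n) => F p.1 p.2.1 p.2.2.1 p.2.2.2)
      (Set.Ici (0:ℝ) ×ˢ (Set.univ ×ˢ (Set.univ ×ˢ Set.univ))))
    (hFL : ∀ t ∈ Set.Ici (0:ℝ), ∀ u₁ y₁ v₁ u₂ y₂ v₂,
      ‖F t u₁ y₁ v₁ - F t u₂ y₂ v₂‖ ≤
        L * (‖u₁ - u₂‖ + ‖y₁ - y₂‖ + ‖v₁ - v₂‖))
    (φ : ℝ → EuclideanSpace ℝ (Fin n))
    (hφ : ContinuousOn φ (Set.Icc (-τ) (0:ℝ))) :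
    ∃ T > 0,
      (∃ x h : ℝ → EuclideanSpace ℝ (Fin n),
        IsImplicitSolutionPair T τ α φ F x h) ∧
      (∀ x₁ h₁ x₂ h₂ : ℝ → EuclideanSpace ℝ (Fin n),
        IsImplicitSolutionPair T τ α φ F x₁ h₁ →
        IsImplicitSolutionPair T τ α φ F x₂ h₂ →
        Set.EqOn x₁ x₂ (Set.Icc (-τ) T) ∧
        Set.EqOn h₁ h₂ (Set.Icc (0:ℝ) T)) := by
  obtain ⟨G, hGc, hG, hGlip⟩ := exists_continuous_implicit_solution hL hFc hFL
  obtain ⟨T, hT, hTτ, hTK⟩ := exists_pos_le_mul_rpow_lt hτ hα.1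
    (Gamma_pos_of_pos (by linarith [hα.1] : 0 < α + 1)) (L / (1 - L))
  obtain ⟨x, hxc, hx, hx_unique⟩ := exists_volterra_solution hα hT.le
    (continuousOn_uncurry_delayed hGc hφ hTτ) (div_nonneg hL.1 (by linarith [hL.2]))
    (fun t _ u₁ u₂ => hGlip t u₁ u₂ _) hTK (φ 0)
  refine ⟨T, hT, ⟨_, _, isImplicitSolutionPair_of_volterraMap hG hGc hT.le hTτ hφ hxc hx⟩,
    fun x₁ h₁ x₂ h₂ hp₁ hp₂ => ?_⟩
  have hsub : Icc 0 T ⊆ Icc (-τ) T := Icc_subset_Icc_left (by linarith)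
  have hx₁₂ : EqOn x₁ x₂ (Icc 0 T) := fun t ht =>
    (hx_unique x₁ (hp₁.1.mono hsub) (hp₁.eq_volterraMap hG hTτ) ht).trans
      (hx_unique x₂ (hp₂.1.mono hsub) (hp₂.eq_volterraMap hG hTτ) ht).symm
  refine ⟨?_, fun t ht => by
    rw [hp₁.eqOn_implicit hG hTτ ht, hp₂.eqOn_implicit hG hTτ ht]
    exact congrArg (fun u => G (t, u, φ (t - τ))) (hx₁₂ ht)⟩
  rw [← Icc_union_Icc_eq_Icc (by linarith) hT.le]
  exact EqOn.union (fun t ht => (hp₁.2.2.1 t ht).trans (hp₂.2.2.1 t ht).symm) hx₁₂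

/-- **Local existence and uniqueness for the implicit delayed fractional
initial value problem.** There is a horizon `T > 0` on which the implicit
problem has a solution pair `(x, h)`, unique in the sense that any two such
pairs coincide on `[-τ,T]` resp. `[0,T]`. -/
theorem exists_unique_implicit_solution_pair
    (n : ℕ) (hn : 1 ≤ n) (τ α L : ℝ) (hτ : 0 < τ)
    (hα : α ∈ Set.Ioc (0:ℝ) 1) (hL : L ∈ Set.Ico (0:ℝ) 1)
    (F : ℝ → EuclideanSpace ℝ (Fin n) → EuclideanSpace ℝ (Fin n) →
      EuclideanSpace ℝ (Fin n) → EuclideanSpace ℝ (Fin n))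
    (hFc : ContinuousOn
      (fun p : ℝ × EuclideanSpace ℝ (Fin n) × EuclideanSpace ℝ (Fin n) ×
          EuclideanSpace ℝ (Fin n) => F p.1 p.2.1 p.2.2.1 p.2.2.2)
      (Set.Ici (0:ℝ) ×ˢ (Set.univ ×ˢ (Set.univ ×ˢ Set.univ))))
    (hFL : ∀ t ∈ Set.Ici (0:ℝ), ∀ u₁ y₁ v₁ u₂ y₂ v₂,
      ‖F t u₁ y₁ v₁ - F t u₂ y₂ v₂‖ ≤
        L * (‖u₁ - u₂‖ + ‖y₁ - y₂‖ + ‖v₁ - v₂‖))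
    (φ : ℝ → EuclideanSpace ℝ (Fin n))
    (hφ : ContinuousOn φ (Set.Icc (-τ) (0:ℝ))) :
    ∃ T > 0,
      (∃ x h : ℝ → EuclideanSpace ℝ (Fin n),
        IsImplicitSolutionPair T τ α φ F x h) ∧
      (∀ x₁ h₁ x₂ h₂ : ℝ → EuclideanSpace ℝ (Fin n),
        IsImplicitSolutionPair T τ α φ F x₁ h₁ →
        IsImplicitSolutionPair T τ α φ F x₂ h₂ →
        Set.EqOn x₁ x₂ (Set.Icc (-τ) T) ∧
        Set.EqOn h₁ h₂ (Set.Icc (0:ℝ) T)) :=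
  exists_unique_implicit_solution_pair_general n τ α L hτ hα hL F hFc hFL φ hφ
end

section
/- Let n ≥ 1, T > 0, τ > 0, α ∈ (0,1], ε ≥ 0, and let φ : [-τ, 0] → ℝⁿ be continuous. Let G : [0,T] × ℝⁿ × ℝⁿ → ℝⁿ be continuous with ‖G(t, u₁, v₁) - G(t, u₂, v₂)‖ ≤ L (‖u₁ - u₂‖ + ‖v₁ - v₂‖) for all arguments. Suppose y : [-τ, T] → ℝⁿ is continuous with y = φ on [-τ, 0], and there is a continuous η : [0, T] → ℝⁿ with ‖η(s)‖ ≤ ε for all s such that y(t) = φ(0) + (1/Γ(α)) ∫₀ᵗ (t-s)^{α-1} [ G(s, y(s), y(s-τ)) + η(s) ] ds for all t ∈ [0, T]. Let x : [-τ, T] → ℝⁿ be continuous with x = φ on [-τ, 0] and x(t) = φ(0) + (1/Γ(α)) ∫₀ᵗ (t-s)^{α-1} G(s, x(s), x(s-τ)) ds for all t ∈ [0, T]. Then there exists a constant C > 0, depending only on L, α, τ and T (and not on ε, y, x, η), such that ‖y(t) - x(t)‖ ≤ C ε for all t ∈ [0, T]. -/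
open MeasureTheory Set Real

/-!
Let `d t = ‖y t - x t‖`; it vanishes on the history interval `[-τ, 0]`. If `d s ≤ M e^{λ s}` on
`[0, T]`, then so does the delayed `d (s - τ)`, and subtracting the two Volterra equations gives
`d t ≤ Γ(α)⁻¹ ∫₀ᵗ (t - s)^{α-1} (2 L M + ε) e^{λ s} ds ≤ (2 L M + ε) λ^{-α} e^{λ t}`, by comparing
with the Gamma integral `∫₀^∞ u^{α-1} e^{-λ u} du = Γ(α) λ^{-α}`. With `λ^α = 4 L` (taking
`L ≥ 1`) the weighted (Bielecki) norm `M = max d(s) e^{-λ s}` therefore satisfies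
`M ≤ M / 2 + ε / (4 L)`, so `d t ≤ ε e^{λ T} / (2 L)` on `[0, T]`.
-/

section RiemannLiouville

variable {E : Type*} [NormedAddCommGroup E] [NormedSpace ℝ E]

noncomputable def riemannLiouvilleIntegral (α : ℝ) (f : ℝ → E) (t : ℝ) : E :=
  (Gamma α)⁻¹ • ∫ s in Ioc 0 t, (t - s) ^ (α - 1) • f s

lemma integrableOn_Ioc_sub_rpow {α t : ℝ} (hα : 0 < α) (ht : 0 ≤ t) :
    IntegrableOn (fun s => (t - s) ^ (α - 1)) (Ioc 0 t) := by
  have h := (intervalIntegral.intervalIntegrable_rpow' (r := α - 1) (by linarith)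
    (a := 0) (b := t)).comp_sub_left t
  simp only [sub_zero, sub_self] at h
  exact (intervalIntegrable_iff_integrableOn_Ioc_of_le ht).1 h.symm

lemma integrableOn_Ioc_sub_rpow_smul {α t : ℝ} {f : ℝ → E} (hα : 0 < α) (ht : 0 ≤ t)
    (hf : ContinuousOn f (Icc 0 t)) :
    IntegrableOn (fun s => (t - s) ^ (α - 1) • f s) (Ioc 0 t) := by
  obtain ⟨B, hB⟩ := isCompact_Icc.exists_bound_of_continuousOn hf
  refine ((integrableOn_Ioc_sub_rpow hα ht).mul_const B).mono'
    ((by fun_prop : Measurable fun s : ℝ => (t - s) ^ (α - 1)).aestronglyMeasurable.smul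
      ((hf.mono Ioc_subset_Icc_self).aestronglyMeasurable measurableSet_Ioc)) ?_
  filter_upwards [self_mem_ae_restrict measurableSet_Ioc] with s hs
  have hk : 0 ≤ (t - s) ^ (α - 1) := rpow_nonneg (by linarith [hs.2]) _
  rw [norm_smul, norm_of_nonneg hk]
  exact mul_le_mul_of_nonneg_left (hB s (Ioc_subset_Icc_self hs)) hk

lemma integral_sub_rpow_mul_exp_le {α lam t : ℝ} (hα : 0 < α) (hlam : 0 < lam) (ht : 0 ≤ t) :
    ∫ s in Ioc 0 t, (t - s) ^ (α - 1) * exp (lam * s) ≤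
      Gamma α * lam ^ (-α) * exp (lam * t) := by
  have hsubst : ∫ s in Ioc 0 t, (t - s) ^ (α - 1) * exp (lam * s) =
      exp (lam * t) * ∫ u in Ioc 0 t, u ^ (α - 1) * exp (-(lam * u)) := by
    rw [← intervalIntegral.integral_of_le ht, ← intervalIntegral.integral_of_le ht,
      ← intervalIntegral.integral_const_mul]
    have := intervalIntegral.integral_comp_sub_left
      (fun u => exp (lam * t) * (u ^ (α - 1) * exp (-(lam * u)))) t (a := 0) (b := t)
    simp only [sub_zero, sub_self] at this
    rw [← this]
    refine intervalIntegral.integral_congr fun s _ => ?_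
    rw [mul_left_comm, ← exp_add]
    ring_nf
  have hint : IntegrableOn (fun u : ℝ => u ^ (α - 1) * exp (-(lam * u))) (Ioi 0) := by
    simpa [rpow_one, neg_mul] using
      integrableOn_rpow_mul_exp_neg_mul_rpow (p := 1) (s := α - 1) (by linarith) one_pos hlam
  have hle : ∫ u in Ioc 0 t, u ^ (α - 1) * exp (-(lam * u)) ≤ Gamma α * lam ^ (-α) := by
    calc ∫ u in Ioc 0 t, u ^ (α - 1) * exp (-(lam * u))
        ≤ ∫ u in Ioi 0, u ^ (α - 1) * exp (-(lam * u)) := by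
          refine setIntegral_mono_set hint ?_ (Filter.Eventually.of_forall Ioc_subset_Ioi_self)
          filter_upwards [self_mem_ae_restrict measurableSet_Ioi] with u hu
          exact mul_nonneg (rpow_nonneg hu.le _) (exp_pos _).le
      _ = Gamma α * lam ^ (-α) := by
          rw [integral_rpow_mul_exp_neg_mul_Ioi hα hlam, one_div, inv_rpow hlam.le,
            rpow_neg hlam.le, mul_comm]
  rw [hsubst, mul_comm _ (exp _)]
  exact mul_le_mul_of_nonneg_left hle (exp_pos _).le

lemma norm_riemannLiouvilleIntegral_le {α lam t A : ℝ} {f : ℝ → E} (hα : 0 < α)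
    (hlam : 0 < lam) (ht : 0 ≤ t) (hA : 0 ≤ A) (hf : ∀ s ∈ Ioc 0 t, ‖f s‖ ≤ A * exp (lam * s)) :
    ‖riemannLiouvilleIntegral α f t‖ ≤ A * lam ^ (-α) * exp (lam * t) := by
  have hΓ : 0 < Gamma α := Gamma_pos_of_pos hα
  have hint : IntegrableOn (fun s => (t - s) ^ (α - 1) * exp (lam * s)) (Ioc 0 t) :=
    integrableOn_Ioc_sub_rpow_smul hα ht (continuous_const.mul continuous_id).rexp.continuousOn
  have hnorm : ‖∫ s in Ioc 0 t, (t - s) ^ (α - 1) • f s‖ ≤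
      A * ∫ s in Ioc 0 t, (t - s) ^ (α - 1) * exp (lam * s) := by
    rw [← integral_const_mul]
    refine norm_integral_le_of_norm_le (hint.const_mul A) ?_
    filter_upwards [self_mem_ae_restrict measurableSet_Ioc] with s hs
    have hk : 0 ≤ (t - s) ^ (α - 1) := rpow_nonneg (by linarith [hs.2]) _
    rw [norm_smul, norm_of_nonneg hk, mul_left_comm]
    exact mul_le_mul_of_nonneg_left (hf s hs) hk
  calc ‖riemannLiouvilleIntegral α f t‖
      ≤ (Gamma α)⁻¹ * (A * (Gamma α * lam ^ (-α) * exp (lam * t))) := by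
        rw [riemannLiouvilleIntegral, norm_smul, norm_inv, norm_of_nonneg hΓ.le]
        gcongr
        exact hnorm.trans (mul_le_mul_of_nonneg_left
          (integral_sub_rpow_mul_exp_le hα hlam ht) hA)
    _ = A * lam ^ (-α) * exp (lam * t) := by field_simp

lemma riemannLiouvilleIntegral_sub {α t : ℝ} {f g : ℝ → E} (hα : 0 < α) (ht : 0 ≤ t)
    (hf : ContinuousOn f (Icc 0 t)) (hg : ContinuousOn g (Icc 0 t)) :
    riemannLiouvilleIntegral α f t - riemannLiouvilleIntegral α g t =
      riemannLiouvilleIntegral α (fun s => f s - g s) t := by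
  simp only [riemannLiouvilleIntegral, smul_sub]
  rw [← smul_sub, ← integral_sub (integrableOn_Ioc_sub_rpow_smul hα ht hf)
    (integrableOn_Ioc_sub_rpow_smul hα ht hg)]

end RiemannLiouville

/-- Apply the improvement to the least admissible `M`, the maximum of `d s * exp (-(λ s))`. -/
lemma le_div_one_sub_mul_exp_of_improving {d : ℝ → ℝ} {T lam a b : ℝ}
    (hd : ContinuousOn d (Icc 0 T)) (hd0 : ∀ s ∈ Icc 0 T, 0 ≤ d s) (ha : a < 1)
    (himp : ∀ M, 0 ≤ M → (∀ s ∈ Icc 0 T, d s ≤ M * exp (lam * s)) →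
      ∀ s ∈ Icc 0 T, d s ≤ (a * M + b) * exp (lam * s)) :
    ∀ t ∈ Icc 0 T, d t ≤ b / (1 - a) * exp (lam * t) := by
  intro t ht
  have hweighted : ContinuousOn (fun s => d s * exp (-(lam * s))) (Icc 0 T) :=
    hd.mul (continuous_const.mul continuous_id).neg.rexp.continuousOn
  obtain ⟨s₀, hs₀, hmax⟩ := isCompact_Icc.exists_isMaxOn ⟨t, ht⟩ hweighted
  set M := d s₀ * exp (-(lam * s₀))
  have hbound : ∀ s ∈ Icc 0 T, d s ≤ M * exp (lam * s) := fun s hs => by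
    have := mul_le_mul_of_nonneg_right (hmax hs) (exp_pos (lam * s)).le
    rwa [mul_assoc, ← exp_add, neg_add_cancel, exp_zero, mul_one] at this
  have hM : M ≤ a * M + b := by
    have := mul_le_mul_of_nonneg_right (himp M (mul_nonneg (hd0 s₀ hs₀) (exp_pos _).le)
      hbound s₀ hs₀) (exp_pos (-(lam * s₀))).le
    rwa [mul_assoc, ← exp_add, add_neg_cancel, exp_zero, mul_one] at this
  have hMb : M ≤ b / (1 - a) := by
    rw [le_div_iff₀ (by linarith)]; linarith
  exact (hbound t ht).trans (mul_le_mul_of_nonneg_right hMb (exp_pos _).le)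

lemma delay_le_mul_exp {D : ℝ → ℝ} {T τ lam M : ℝ} (hτ : 0 ≤ τ) (hlam : 0 ≤ lam)
    (hM : 0 ≤ M) (hhist : ∀ r ∈ Icc (-τ) 0, D r = 0)
    (hD : ∀ r ∈ Icc 0 T, D r ≤ M * exp (lam * r)) :
    ∀ s ∈ Icc 0 T, D (s - τ) ≤ M * exp (lam * s) := by
  intro s hs
  rcases le_total s τ with hsτ | hτs
  · rw [hhist _ ⟨by linarith [hs.1], by linarith⟩]
    positivity
  · refine (hD _ ⟨by linarith, by linarith [hs.2]⟩).trans ?_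
    gcongr
    linarith

lemma ContinuousOn.comp_delay {E F : Type*} [TopologicalSpace E] [TopologicalSpace F]
    {G : ℝ → E → E → F} {y : ℝ → E} {T τ : ℝ}
    (hG : ContinuousOn (fun p : ℝ × E × E => G p.1 p.2.1 p.2.2) (Icc 0 T ×ˢ (univ ×ˢ univ)))
    (hy : ContinuousOn y (Icc (-τ) T)) (hτ : 0 ≤ τ) :
    ContinuousOn (fun s => G s (y s) (y (s - τ))) (Icc 0 T) := by
  have hyT : ContinuousOn y (Icc 0 T) := hy.mono (Icc_subset_Icc_left (by linarith))
  have hyτ : ContinuousOn (fun s => y (s - τ)) (Icc 0 T) :=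
    hy.comp (continuous_sub_right τ).continuousOn fun s hs =>
      ⟨by linarith [hs.1], by linarith [hs.2]⟩
  exact hG.comp (continuousOn_id.prodMk (hyT.prodMk hyτ)) fun s hs => ⟨hs, trivial, trivial⟩

lemma norm_add_sub_le_of_lipschitz {E F : Type*} [SeminormedAddCommGroup E]
    [SeminormedAddCommGroup F] {g : E → E → F} {K B ε : ℝ} {u₁ v₁ u₂ v₂ : E} {w : F}
    (hg : ∀ u₁ v₁ u₂ v₂, ‖g u₁ v₁ - g u₂ v₂‖ ≤ K * (‖u₁ - u₂‖ + ‖v₁ - v₂‖)) (hK : 0 ≤ K)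
    (hw : ‖w‖ ≤ ε) (hu : ‖u₁ - u₂‖ ≤ B) (hv : ‖v₁ - v₂‖ ≤ B) :
    ‖g u₁ v₁ + w - g u₂ v₂‖ ≤ 2 * K * B + ε := by
  calc ‖g u₁ v₁ + w - g u₂ v₂‖ ≤ ‖g u₁ v₁ - g u₂ v₂‖ + ‖w‖ := by
        rw [add_sub_right_comm]; exact norm_add_le _ _
    _ ≤ K * (B + B) + ε := by grw [hg, hu, hv, hw]
    _ = 2 * K * B + ε := by ring

lemma norm_sub_le_mul_exp_of_delayed_volterra {E : Type*} [NormedAddCommGroup E]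
    [NormedSpace ℝ E] {G : ℝ → E → E → E} {x y η : ℝ → E}
    {T τ α K ε lam M : ℝ} (hα : 0 < α) (hlam : 0 < lam) (hK : 0 ≤ K) (hτ : 0 ≤ τ)
    (hε : 0 ≤ ε) (hM : 0 ≤ M)
    (hGc : ContinuousOn (fun p : ℝ × E × E => G p.1 p.2.1 p.2.2) (Icc 0 T ×ˢ (univ ×ˢ univ)))
    (hGK : ∀ s ∈ Icc 0 T, ∀ u₁ v₁ u₂ v₂,
      ‖G s u₁ v₁ - G s u₂ v₂‖ ≤ K * (‖u₁ - u₂‖ + ‖v₁ - v₂‖))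
    (hyc : ContinuousOn y (Icc (-τ) T)) (hxc : ContinuousOn x (Icc (-τ) T))
    (hηc : ContinuousOn η (Icc 0 T)) (hηε : ∀ s ∈ Icc 0 T, ‖η s‖ ≤ ε)
    (hyx : ∀ r ∈ Icc (-τ) 0, y r = x r)
    (hvolterra : ∀ t ∈ Icc 0 T, y t - x t =
      riemannLiouvilleIntegral α (fun s => G s (y s) (y (s - τ)) + η s) t -
        riemannLiouvilleIntegral α (fun s => G s (x s) (x (s - τ))) t)
    (hdM : ∀ s ∈ Icc 0 T, ‖y s - x s‖ ≤ M * exp (lam * s)) :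
    ∀ t ∈ Icc 0 T, ‖y t - x t‖ ≤ (2 * K * M + ε) * lam ^ (-α) * exp (lam * t) := by
  intro t ⟨ht0, htT⟩
  have hdelay := delay_le_mul_exp (D := fun s => ‖y s - x s‖) hτ hlam.le hM
    (fun r hr => by simp [hyx r hr]) hdM
  have hIcc : Icc 0 t ⊆ Icc 0 T := Icc_subset_Icc_right htT
  rw [hvolterra t ⟨ht0, htT⟩, riemannLiouvilleIntegral_sub
    (f := fun s => G s (y s) (y (s - τ)) + η s) hα ht0
    (((hGc.comp_delay hyc hτ).add hηc).mono hIcc) ((hGc.comp_delay hxc hτ).mono hIcc)]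
  refine norm_riemannLiouvilleIntegral_le hα hlam ht0 (by positivity) fun s ⟨hs0, hst⟩ => ?_
  have hs : s ∈ Icc 0 T := ⟨hs0.le, hst.trans htT⟩
  calc _ ≤ 2 * K * (M * exp (lam * s)) + ε :=
        norm_add_sub_le_of_lipschitz (hGK s hs) hK (hηε s hs) (hdM s hs) (hdelay s hs)
    _ ≤ (2 * K * M + ε) * exp (lam * s) := by
        nlinarith [one_le_exp (by positivity : 0 ≤ lam * s)]

theorem ulam_hyers_stability_delayed_fractional_general
    (T τ α L : ℝ) (hτ : 0 < τ) (hα : α ∈ Set.Ioc (0:ℝ) 1) :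
    ∃ C > 0, ∀ (n : ℕ), 1 ≤ n → ∀ ε : ℝ, 0 ≤ ε →
      ∀ (φ y x η : ℝ → EuclideanSpace ℝ (Fin n))
        (G : ℝ → EuclideanSpace ℝ (Fin n) → EuclideanSpace ℝ (Fin n) →
          EuclideanSpace ℝ (Fin n)),
      ContinuousOn φ (Set.Icc (-τ) (0:ℝ)) →
      ContinuousOn
        (fun p : ℝ × EuclideanSpace ℝ (Fin n) × EuclideanSpace ℝ (Fin n) =>
          G p.1 p.2.1 p.2.2)
        (Set.Icc (0:ℝ) T ×ˢ (Set.univ ×ˢ Set.univ)) →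
      (∀ t ∈ Set.Icc (0:ℝ) T, ∀ u₁ v₁ u₂ v₂,
        ‖G t u₁ v₁ - G t u₂ v₂‖ ≤ L * (‖u₁ - u₂‖ + ‖v₁ - v₂‖)) →
      ContinuousOn y (Set.Icc (-τ) T) →
      (∀ t ∈ Set.Icc (-τ) (0:ℝ), y t = φ t) →
      ContinuousOn η (Set.Icc (0:ℝ) T) →
      (∀ s ∈ Set.Icc (0:ℝ) T, ‖η s‖ ≤ ε) →
      (∀ t ∈ Set.Icc (0:ℝ) T, y t =
        φ 0 + (Real.Gamma α)⁻¹ • ∫ s in Set.Ioc (0:ℝ) t,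
          ((t - s) ^ (α - 1)) • (G s (y s) (y (s - τ)) + η s)) →
      ContinuousOn x (Set.Icc (-τ) T) →
      (∀ t ∈ Set.Icc (-τ) (0:ℝ), x t = φ t) →
      (∀ t ∈ Set.Icc (0:ℝ) T, x t =
        φ 0 + (Real.Gamma α)⁻¹ • ∫ s in Set.Ioc (0:ℝ) t,
          ((t - s) ^ (α - 1)) • G s (x s) (x (s - τ))) →
      ∀ t ∈ Set.Icc (0:ℝ) T, ‖y t - x t‖ ≤ C * ε := by
  obtain ⟨hα0, -⟩ := hα
  set K := max L 1
  have hK : 0 < K := lt_max_of_lt_right one_pos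
  set lam := (4 * K) ^ α⁻¹
  have hlam : 0 < lam := by positivity
  have hlamα : lam ^ (-α) = (4 * K)⁻¹ := by
    rw [rpow_neg hlam.le, ← rpow_mul (by positivity), inv_mul_cancel₀ hα0.ne', rpow_one]
  refine ⟨exp (lam * T) / (2 * K), by positivity, ?_⟩
  intro n _ ε hε φ y x η G _ hGc hGlip hyc hyφ hηc hηε hyint hxc hxφ hxint t ht
  have hGK : ∀ s ∈ Icc 0 T, ∀ u₁ v₁ u₂ v₂,
      ‖G s u₁ v₁ - G s u₂ v₂‖ ≤ K * (‖u₁ - u₂‖ + ‖v₁ - v₂‖) := fun s hs u₁ v₁ u₂ v₂ =>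
    (hGlip s hs u₁ v₁ u₂ v₂).trans (by gcongr; exact le_max_left _ _)
  have hvolterra : ∀ t ∈ Icc 0 T, y t - x t =
      riemannLiouvilleIntegral α (fun s => G s (y s) (y (s - τ)) + η s) t -
        riemannLiouvilleIntegral α (fun s => G s (x s) (x (s - τ))) t := fun t ht => by
    rw [hyint t ht, hxint t ht, add_sub_add_left_eq_sub]; rfl
  have hweighted := le_div_one_sub_mul_exp_of_improving (d := fun s => ‖y s - x s‖)
    (a := 1 / 2) (b := ε / (4 * K)) ((hyc.sub hxc).norm.mono (Icc_subset_Icc_left (by linarith)))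
    (fun _ _ => norm_nonneg _) (by norm_num) fun M hM hdM s hs =>
      (norm_sub_le_mul_exp_of_delayed_volterra hα0 hlam hK.le hτ.le hε hM hGc hGK hyc hxc hηc
        hηε (fun r hr => (hyφ r hr).trans (hxφ r hr).symm) hvolterra hdM s hs).trans_eq
        (by rw [hlamα]; field_simp; ring)
  calc ‖y t - x t‖ ≤ ε / (4 * K) / (1 - 1 / 2) * exp (lam * t) := hweighted t ht
    _ ≤ ε / (4 * K) / (1 - 1 / 2) * exp (lam * T) := by gcongr; exact ht.2
    _ = exp (lam * T) / (2 * K) * ε := by field_simp; ring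

/-- **Ulam–Hyers stability of the delayed fractional Volterra equation.**
If `y` is an ε-approximate solution (with continuous defect `η`, `‖η‖ ≤ ε`)
of the Volterra form of `ᶜD^α x(t) = G(t, x(t), x(t-τ))` and `x` is an exact
solution with the same history `φ`, then `‖y(t) - x(t)‖ ≤ C ε` on `[0,T]`,
with `C` depending only on `L`, `α`, `τ` and `T`. -/
theorem ulam_hyers_stability_delayed_fractional
    (T τ α L : ℝ) (hT : 0 < T) (hτ : 0 < τ) (hα : α ∈ Set.Ioc (0:ℝ) 1) :
    ∃ C > 0, ∀ (n : ℕ), 1 ≤ n → ∀ ε : ℝ, 0 ≤ ε →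
      ∀ (φ y x η : ℝ → EuclideanSpace ℝ (Fin n))
        (G : ℝ → EuclideanSpace ℝ (Fin n) → EuclideanSpace ℝ (Fin n) →
          EuclideanSpace ℝ (Fin n)),
      ContinuousOn φ (Set.Icc (-τ) (0:ℝ)) →
      ContinuousOn
        (fun p : ℝ × EuclideanSpace ℝ (Fin n) × EuclideanSpace ℝ (Fin n) =>
          G p.1 p.2.1 p.2.2)
        (Set.Icc (0:ℝ) T ×ˢ (Set.univ ×ˢ Set.univ)) →
      (∀ t ∈ Set.Icc (0:ℝ) T, ∀ u₁ v₁ u₂ v₂,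
        ‖G t u₁ v₁ - G t u₂ v₂‖ ≤ L * (‖u₁ - u₂‖ + ‖v₁ - v₂‖)) →
      ContinuousOn y (Set.Icc (-τ) T) →
      (∀ t ∈ Set.Icc (-τ) (0:ℝ), y t = φ t) →
      ContinuousOn η (Set.Icc (0:ℝ) T) →
      (∀ s ∈ Set.Icc (0:ℝ) T, ‖η s‖ ≤ ε) →
      (∀ t ∈ Set.Icc (0:ℝ) T, y t =
        φ 0 + (Real.Gamma α)⁻¹ • ∫ s in Set.Ioc (0:ℝ) t,
          ((t - s) ^ (α - 1)) • (G s (y s) (y (s - τ)) + η s)) →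
      ContinuousOn x (Set.Icc (-τ) T) →
      (∀ t ∈ Set.Icc (-τ) (0:ℝ), x t = φ t) →
      (∀ t ∈ Set.Icc (0:ℝ) T, x t =
        φ 0 + (Real.Gamma α)⁻¹ • ∫ s in Set.Ioc (0:ℝ) t,
          ((t - s) ^ (α - 1)) • G s (x s) (x (s - τ))) →
      ∀ t ∈ Set.Icc (0:ℝ) T, ‖y t - x t‖ ≤ C * ε :=
  ulam_hyers_stability_delayed_fractional_general T τ α L hτ hα
end

section
/- Let n ≥ 1, T > 0, τ > 0, α ∈ (0,1], and let G : [0,T] × ℝⁿ × ℝⁿ → ℝⁿ be continuous with ‖G(t, u₁, v₁) - G(t, u₂, v₂)‖ ≤ L (‖u₁ - u₂‖ + ‖v₁ - v₂‖) for all arguments. For i = 1, 2, let φᵢ : [-τ, 0] → ℝⁿ be continuous and let xᵢ : [-τ, T] → ℝⁿ be continuous with xᵢ = φᵢ on [-τ, 0] and xᵢ(t) = φᵢ(0) + (1/Γ(α)) ∫₀ᵗ (t-s)^{α-1} G(s, xᵢ(s), xᵢ(s-τ)) ds for all t ∈ [0, T]. Then there exists a constant M > 0, depending only on L, α, τ and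 T, such that sup_{t ∈ [0,T]} ‖x₁(t) - x₂(t)‖ ≤ M · sup_{θ ∈ [-τ,0]} ‖φ₁(θ) - φ₂(θ)‖. -/
open MeasureTheory Set Real

/-!
The difference `e = ‖x₁ - x₂‖` satisfies `e t ≤ δ + L · I^α[e + e (· - τ)] t` on `[0, T]` and
`e ≤ δ` on `[-τ, 0]`, where `δ` bounds the difference of the histories. This delayed fractional
Gronwall inequality is closed with a Bielecki weight: if `K` is the maximum of `exp (-r t) · e t`
on `[0, T]`, then `e s + e (s - τ) ≤ (δ + 2K) exp (r s)`, and `I^α[exp (r ·)] t ≤ exp (r t) / r ^ α`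
by comparison with the Gamma integral. Choosing `r ^ α = 4L + 1` gives `K ≤ 5/4 δ + K/2`, hence
`e t ≤ 5/2 · exp (r T) · δ`.
-/

noncomputable def rlIntegral {E : Type*} [NormedAddCommGroup E] [NormedSpace ℝ E]
    (α : ℝ) (f : ℝ → E) (t : ℝ) : E :=
  (Gamma α)⁻¹ • ∫ s in Ioc 0 t, (t - s) ^ (α - 1) • f s

section RiemannLiouville

variable {E : Type*} [NormedAddCommGroup E] [NormedSpace ℝ E] {α t : ℝ}

lemma integrableOn_sub_rpow (hα : 0 < α) :
    IntegrableOn (fun s : ℝ => (t - s) ^ (α - 1)) (Ioc 0 t) := by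
  have h := (intervalIntegral.intervalIntegrable_rpow' (a := 0) (b := t)
    (r := α - 1) (by linarith)).comp_sub_left t
  simp only [sub_zero, sub_self] at h
  exact h.symm.1

lemma integrableOn_sub_rpow_smul (hα : 0 < α) {f : ℝ → E} (hf : ContinuousOn f (Icc 0 t)) :
    IntegrableOn (fun s => (t - s) ^ (α - 1) • f s) (Ioc 0 t) :=
  (integrableOn_sub_rpow hα).smul_continuousOn_of_subset hf measurableSet_Ioc isCompact_Icc
    Ioc_subset_Icc_self

lemma rlIntegral_sub {f g : ℝ → E}
    (hf : IntegrableOn (fun s => (t - s) ^ (α - 1) • f s) (Ioc 0 t))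
    (hg : IntegrableOn (fun s => (t - s) ^ (α - 1) • g s) (Ioc 0 t)) :
    rlIntegral α (fun s => f s - g s) t = rlIntegral α f t - rlIntegral α g t := by
  simp only [rlIntegral, smul_sub, integral_sub hf hg]

lemma rlIntegral_const_mul (c : ℝ) (f : ℝ → ℝ) :
    rlIntegral α (fun s => c * f s) t = c * rlIntegral α f t := by
  simp only [rlIntegral, smul_eq_mul, mul_left_comm _ c, integral_const_mul]

lemma norm_rlIntegral_le (hα : 0 < α) {f : ℝ → E} {g : ℝ → ℝ}
    (hg : IntegrableOn (fun s => (t - s) ^ (α - 1) * g s) (Ioc 0 t))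
    (hfg : ∀ s ∈ Ioc 0 t, ‖f s‖ ≤ g s) :
    ‖rlIntegral α f t‖ ≤ rlIntegral α g t := by
  have hΓ : 0 ≤ (Gamma α)⁻¹ := inv_nonneg.2 (Gamma_pos_of_pos hα).le
  rw [rlIntegral, rlIntegral, norm_smul, norm_of_nonneg hΓ, smul_eq_mul]
  refine mul_le_mul_of_nonneg_left (norm_integral_le_of_norm_le hg ?_) hΓ
  filter_upwards [ae_restrict_mem measurableSet_Ioc] with s hs
  have hk : 0 ≤ (t - s) ^ (α - 1) := rpow_nonneg (sub_nonneg.2 hs.2) _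
  rw [norm_smul, norm_of_nonneg hk]
  exact mul_le_mul_of_nonneg_left (hfg s hs) hk

lemma rlIntegral_mono (hα : 0 < α) {f g : ℝ → ℝ}
    (hg : IntegrableOn (fun s => (t - s) ^ (α - 1) * g s) (Ioc 0 t))
    (hf : ∀ s ∈ Ioc 0 t, 0 ≤ f s) (hfg : ∀ s ∈ Ioc 0 t, f s ≤ g s) :
    rlIntegral α f t ≤ rlIntegral α g t :=
  (le_abs_self _).trans <| norm_rlIntegral_le hα hg fun s hs => by
    rw [norm_of_nonneg (hf s hs)]; exact hfg s hs

lemma rlIntegral_exp_le (hα : 0 < α) {r : ℝ} (hr : 0 < r) (ht : 0 ≤ t) :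
    rlIntegral α (fun s => exp (r * s)) t ≤ exp (r * t) / r ^ α := by
  have hGamma := integral_rpow_mul_exp_neg_mul_Ioi hα hr
  have hint : IntegrableOn (fun u : ℝ => u ^ (α - 1) * exp (-(r * u))) (Ioi 0) :=
    .of_integral_ne_zero (by rw [hGamma]; positivity)
  have hsubst : ∫ s in Ioc 0 t, (t - s) ^ (α - 1) * exp (r * s)
      = exp (r * t) * ∫ u in Ioc 0 t, u ^ (α - 1) * exp (-(r * u)) := by
    rw [← intervalIntegral.integral_of_le ht, ← intervalIntegral.integral_of_le ht,
      ← intervalIntegral.integral_const_mul]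
    have := intervalIntegral.integral_comp_sub_left
      (fun u : ℝ => exp (r * t) * (u ^ (α - 1) * exp (-(r * u)))) (a := 0) (b := t) t
    simp only [sub_zero, sub_self] at this
    rw [← this]
    refine intervalIntegral.integral_congr fun s _ => ?_
    rw [mul_left_comm, ← exp_add]
    ring_nf
  have htrunc : ∫ u in Ioc 0 t, u ^ (α - 1) * exp (-(r * u)) ≤ (1 / r) ^ α * Gamma α :=
    hGamma ▸ setIntegral_mono_set hint
      ((ae_restrict_iff' measurableSet_Ioi).2 (ae_of_all _ fun u (hu : 0 < u) =>
        mul_nonneg (rpow_nonneg hu.le _) (exp_pos _).le))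
      Ioc_subset_Ioi_self.eventuallyLE
  calc rlIntegral α (fun s => exp (r * s)) t
      = (Gamma α)⁻¹ * (exp (r * t) * ∫ u in Ioc 0 t, u ^ (α - 1) * exp (-(r * u))) := by
        simp only [rlIntegral, smul_eq_mul, hsubst]
    _ ≤ (Gamma α)⁻¹ * (exp (r * t) * ((1 / r) ^ α * Gamma α)) := by gcongr
    _ = exp (r * t) / r ^ α := by
        rw [div_rpow zero_le_one hr.le, one_rpow]; field_simp

end RiemannLiouville

lemma continuousOn_delay {E : Type*} [TopologicalSpace E] {x : ℝ → E} {τ T : ℝ} (hτ : 0 ≤ τ)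
    (hx : ContinuousOn x (Icc (-τ) T)) : ContinuousOn (fun s => x (s - τ)) (Icc 0 T) :=
  hx.comp (continuousOn_id.sub continuousOn_const) fun s hs =>
    ⟨by linarith [hs.1], by linarith [hs.2]⟩

lemma ContinuousOn.delayed_comp {E F : Type*} [TopologicalSpace E] [TopologicalSpace F]
    {G : ℝ → E → E → F} {τ T : ℝ}
    (hG : ContinuousOn (fun p : ℝ × E × E => G p.1 p.2.1 p.2.2) (Icc 0 T ×ˢ (univ ×ˢ univ)))
    (hτ : 0 ≤ τ) {x : ℝ → E} (hx : ContinuousOn x (Icc (-τ) T)) :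
    ContinuousOn (fun s => G s (x s) (x (s - τ))) (Icc 0 T) :=
  hG.comp (continuousOn_id.prodMk ((hx.mono (Icc_subset_Icc_left (by linarith))).prodMk
    (continuousOn_delay hτ hx))) fun _ hs => ⟨hs, mem_univ _, mem_univ _⟩

lemma add_delay_le_of_weighted_bound {e : ℝ → ℝ} {τ T r δ K : ℝ} (hτ : 0 ≤ τ) (hr : 0 ≤ r)
    (hδ : 0 ≤ δ) (hK : 0 ≤ K) (hhist : ∀ s ∈ Icc (-τ) 0, e s ≤ δ)
    (hweighted : ∀ s ∈ Icc 0 T, e s ≤ exp (r * s) * K) :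
    ∀ s ∈ Icc 0 T, e s + e (s - τ) ≤ (δ + 2 * K) * exp (r * s) := by
  intro s hs
  have hδs : δ ≤ δ * exp (r * s) :=
    le_mul_of_one_le_right hδ (one_le_exp (mul_nonneg hr hs.1))
  have hdelayed : e (s - τ) ≤ δ + exp (r * s) * K := by
    rcases le_or_gt (s - τ) 0 with h | h
    · linarith [hhist (s - τ) ⟨by linarith [hs.1], h⟩, mul_nonneg (exp_pos (r * s)).le hK]
    · calc e (s - τ) ≤ exp (r * (s - τ)) * K := hweighted _ ⟨h.le, by linarith [hs.2]⟩
        _ ≤ exp (r * s) * K := by gcongr; linarith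
        _ ≤ δ + exp (r * s) * K := le_add_of_nonneg_left hδ
  linarith [hweighted s hs]

theorem delayed_fractional_gronwall {α c τ T δ t : ℝ} {e : ℝ → ℝ} (hα : 0 < α) (hc : 0 ≤ c)
    (hτ : 0 ≤ τ) (he0 : ∀ s, 0 ≤ e s) (he : ContinuousOn e (Icc 0 T))
    (hhist : ∀ s ∈ Icc (-τ) 0, e s ≤ δ)
    (hvolterra : ∀ t ∈ Icc 0 T, e t ≤ δ + c * rlIntegral α (fun s => e s + e (s - τ)) t)
    (ht : t ∈ Icc 0 T) :
    e t ≤ 5 / 2 * exp ((4 * c + 1) ^ α⁻¹ * T) * δ := by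
  set r := (4 * c + 1) ^ α⁻¹
  have hr : 0 < r := by positivity
  have hrα : r ^ α = 4 * c + 1 := by
    rw [← rpow_mul (by positivity), inv_mul_cancel₀ hα.ne', rpow_one]
  have hδ : 0 ≤ δ := (he0 0).trans (hhist 0 ⟨by linarith, le_rfl⟩)
  have hw : ContinuousOn (fun s => exp (-r * s) * e s) (Icc 0 T) := by fun_prop
  obtain ⟨t₀, ht₀, hmax⟩ := isCompact_Icc.exists_isMaxOn ⟨t, ht⟩ hw
  set K := exp (-r * t₀) * e t₀
  have hK : 0 ≤ K := mul_nonneg (exp_pos _).le (he0 t₀)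
  have hweighted : ∀ s ∈ Icc 0 T, e s ≤ exp (r * s) * K := fun s hs => by
    have h : exp (-r * s) * e s ≤ K := hmax hs
    rwa [neg_mul, exp_neg, inv_mul_le_iff₀ (exp_pos _)] at h
  have hpast := add_delay_le_of_weighted_bound hτ hr.le hδ hK hhist hweighted
  have hq : c / r ^ α ≤ 1 / 4 := by
    rw [hrα, div_le_iff₀ (by positivity)]; linarith
  have hmemory : rlIntegral α (fun s => e s + e (s - τ)) t₀ ≤
      (δ + 2 * K) * (exp (r * t₀) / r ^ α) :=
    calc rlIntegral α (fun s => e s + e (s - τ)) t₀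
        ≤ rlIntegral α (fun s => (δ + 2 * K) * exp (r * s)) t₀ :=
          rlIntegral_mono hα (integrableOn_sub_rpow_smul hα (by fun_prop))
            (fun s _ => add_nonneg (he0 s) (he0 _))
            fun s hs => hpast s ⟨hs.1.le, hs.2.trans ht₀.2⟩
      _ = (δ + 2 * K) * rlIntegral α (fun s => exp (r * s)) t₀ := rlIntegral_const_mul _ _
      _ ≤ (δ + 2 * K) * (exp (r * t₀) / r ^ α) := by
          gcongr; exact rlIntegral_exp_le hα hr ht₀.1
  have hKδ : K ≤ 5 / 2 * δ := by
    have hdecay : exp (-r * t₀) ≤ 1 := exp_le_one_iff.2 (by nlinarith [ht₀.1])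
    have hcontract : K ≤ 1 * δ + 1 / 4 * (δ + 2 * K) :=
      calc K ≤ exp (-r * t₀) * (δ + c * ((δ + 2 * K) * (exp (r * t₀) / r ^ α))) := by
            refine mul_le_mul_of_nonneg_left ((hvolterra t₀ ht₀).trans ?_) (exp_pos _).le
            gcongr
        _ = exp (-r * t₀) * δ + c / r ^ α * (δ + 2 * K) := by
            rw [neg_mul, exp_neg]; field_simp
        _ ≤ 1 * δ + 1 / 4 * (δ + 2 * K) := by gcongr
    linarith
  calc e t ≤ exp (r * t) * K := hweighted t ht
    _ ≤ exp (r * T) * (5 / 2 * δ) := by gcongr; exact ht.2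
    _ = 5 / 2 * exp (r * T) * δ := by ring

section DelayedVolterra

variable {E : Type*} [NormedAddCommGroup E] [NormedSpace ℝ E] {G : ℝ → E → E → E}
  {α τ T L : ℝ}

theorem norm_sub_le_of_delayed_volterra (hα : 0 < α) (hτ : 0 ≤ τ)
    (hG : ContinuousOn (fun p : ℝ × E × E => G p.1 p.2.1 p.2.2) (Icc 0 T ×ˢ (univ ×ˢ univ)))
    (hGL : ∀ t ∈ Icc 0 T, ∀ u₁ v₁ u₂ v₂,
      ‖G t u₁ v₁ - G t u₂ v₂‖ ≤ L * (‖u₁ - u₂‖ + ‖v₁ - v₂‖))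
    {x₁ x₂ : ℝ → E} {a₁ a₂ : E}
    (hx₁ : ContinuousOn x₁ (Icc (-τ) T)) (hx₂ : ContinuousOn x₂ (Icc (-τ) T))
    (h₁ : ∀ t ∈ Icc 0 T, x₁ t = a₁ + rlIntegral α (fun s => G s (x₁ s) (x₁ (s - τ))) t)
    (h₂ : ∀ t ∈ Icc 0 T, x₂ t = a₂ + rlIntegral α (fun s => G s (x₂ s) (x₂ (s - τ))) t)
    {t : ℝ} (ht : t ∈ Icc 0 T) :
    ‖x₁ t - x₂ t‖ ≤ ‖a₁ - a₂‖ +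
      L * rlIntegral α (fun s => ‖x₁ s - x₂ s‖ + ‖x₁ (s - τ) - x₂ (s - τ)‖) t := by
  have hsub : Icc 0 t ⊆ Icc 0 T := Icc_subset_Icc_right ht.2
  have hF : ∀ x : ℝ → E, ContinuousOn x (Icc (-τ) T) →
      IntegrableOn (fun s => (t - s) ^ (α - 1) • G s (x s) (x (s - τ))) (Ioc 0 t) :=
    fun x hx => integrableOn_sub_rpow_smul hα ((hG.delayed_comp hτ hx).mono hsub)
  have hdist : ContinuousOn (fun s => L * (‖x₁ s - x₂ s‖ + ‖x₁ (s - τ) - x₂ (s - τ)‖))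
      (Icc 0 t) :=
    (continuousOn_const.mul (((hx₁.sub hx₂).norm.mono (Icc_subset_Icc_left (by linarith))).add
      (continuousOn_delay hτ (hx₁.sub hx₂)).norm)).mono hsub
  rw [h₁ t ht, h₂ t ht, add_sub_add_comm, ← rlIntegral_sub (hF x₁ hx₁) (hF x₂ hx₂),
    ← rlIntegral_const_mul]
  exact (norm_add_le _ _).trans <| add_le_add le_rfl <| norm_rlIntegral_le hα
    (integrableOn_sub_rpow_smul hα hdist) fun s hs => hGL s ⟨hs.1.le, hs.2.trans ht.2⟩ _ _ _ _

end DelayedVolterra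

theorem continuous_dependence_on_history_general
    (T τ α L : ℝ) (hτ : 0 < τ) (hα : α ∈ Set.Ioc (0:ℝ) 1) :
    ∃ M > 0, ∀ (n : ℕ), 1 ≤ n →
      ∀ (G : ℝ → EuclideanSpace ℝ (Fin n) → EuclideanSpace ℝ (Fin n) →
          EuclideanSpace ℝ (Fin n)),
      ContinuousOn
        (fun p : ℝ × EuclideanSpace ℝ (Fin n) × EuclideanSpace ℝ (Fin n) =>
          G p.1 p.2.1 p.2.2)
        (Set.Icc (0:ℝ) T ×ˢ (Set.univ ×ˢ Set.univ)) →
      (∀ t ∈ Set.Icc (0:ℝ) T, ∀ u₁ v₁ u₂ v₂,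
        ‖G t u₁ v₁ - G t u₂ v₂‖ ≤ L * (‖u₁ - u₂‖ + ‖v₁ - v₂‖)) →
      ∀ (φ₁ φ₂ x₁ x₂ : ℝ → EuclideanSpace ℝ (Fin n)),
      ContinuousOn φ₁ (Set.Icc (-τ) (0:ℝ)) →
      ContinuousOn φ₂ (Set.Icc (-τ) (0:ℝ)) →
      ContinuousOn x₁ (Set.Icc (-τ) T) → ContinuousOn x₂ (Set.Icc (-τ) T) →
      (∀ t ∈ Set.Icc (-τ) (0:ℝ), x₁ t = φ₁ t) →
      (∀ t ∈ Set.Icc (-τ) (0:ℝ), x₂ t = φ₂ t) →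
      (∀ t ∈ Set.Icc (0:ℝ) T, x₁ t =
        φ₁ 0 + (Real.Gamma α)⁻¹ • ∫ s in Set.Ioc (0:ℝ) t,
          ((t - s) ^ (α - 1)) • G s (x₁ s) (x₁ (s - τ))) →
      (∀ t ∈ Set.Icc (0:ℝ) T, x₂ t =
        φ₂ 0 + (Real.Gamma α)⁻¹ • ∫ s in Set.Ioc (0:ℝ) t,
          ((t - s) ^ (α - 1)) • G s (x₂ s) (x₂ (s - τ))) →
      (⨆ t : Set.Icc (0:ℝ) T, ‖x₁ t - x₂ t‖) ≤
        M * ⨆ θ : Set.Icc (-τ) (0:ℝ), ‖φ₁ θ - φ₂ θ‖ := by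
  refine ⟨5 / 2 * exp ((4 * max L 0 + 1) ^ α⁻¹ * T), by positivity, ?_⟩
  intro n _ G hGc hGL φ₁ φ₂ x₁ x₂ hφ₁ hφ₂ hx₁ hx₂ hist₁ hist₂ heq₁ heq₂
  set δ := ⨆ θ : Icc (-τ) (0:ℝ), ‖φ₁ θ - φ₂ θ‖
  have hδ : ∀ θ ∈ Icc (-τ) (0:ℝ), ‖φ₁ θ - φ₂ θ‖ ≤ δ := fun θ hθ =>
    le_ciSup (isCompact_range (hφ₁.sub hφ₂).norm.domRestrict).bddAbove ⟨θ, hθ⟩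
  have hGL' : ∀ t ∈ Icc 0 T, ∀ u₁ v₁ u₂ v₂,
      ‖G t u₁ v₁ - G t u₂ v₂‖ ≤ max L 0 * (‖u₁ - u₂‖ + ‖v₁ - v₂‖) :=
    fun t ht u₁ v₁ u₂ v₂ => (hGL t ht u₁ v₁ u₂ v₂).trans (by gcongr; exact le_max_left L 0)
  refine Real.iSup_le (fun t => delayed_fractional_gronwall hα.1 (le_max_right L 0) hτ.le
      (fun s => norm_nonneg (x₁ s - x₂ s))
      ((hx₁.sub hx₂).norm.mono (Icc_subset_Icc_left (by linarith)))
      (fun s hs => by rw [hist₁ s hs, hist₂ s hs]; exact hδ s hs) (fun t ht => ?_) t.2)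
    (mul_nonneg (by positivity) (Real.iSup_nonneg fun _ => norm_nonneg _))
  exact (norm_sub_le_of_delayed_volterra hα.1 hτ.le hGc hGL' hx₁ hx₂ heq₁ heq₂ ht).trans
    (add_le_add (hδ 0 ⟨by linarith, le_rfl⟩) le_rfl)

/-- **Continuous (Lipschitz) dependence on the initial history.**
If `x₁, x₂` solve the delayed fractional Volterra equation
`xᵢ(t) = φᵢ(0) + (1/Γ(α)) ∫₀ᵗ (t-s)^(α-1) G(s, xᵢ(s), xᵢ(s-τ)) ds` with
histories `φ₁, φ₂`, then
`sup_{[0,T]} ‖x₁ - x₂‖ ≤ M · sup_{[-τ,0]} ‖φ₁ - φ₂‖` with `M` depending only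
on `L`, `α`, `τ` and `T`. -/
theorem continuous_dependence_on_history
    (T τ α L : ℝ) (hT : 0 < T) (hτ : 0 < τ) (hα : α ∈ Set.Ioc (0:ℝ) 1) :
    ∃ M > 0, ∀ (n : ℕ), 1 ≤ n →
      ∀ (G : ℝ → EuclideanSpace ℝ (Fin n) → EuclideanSpace ℝ (Fin n) →
          EuclideanSpace ℝ (Fin n)),
      ContinuousOn
        (fun p : ℝ × EuclideanSpace ℝ (Fin n) × EuclideanSpace ℝ (Fin n) =>
          G p.1 p.2.1 p.2.2)
        (Set.Icc (0:ℝ) T ×ˢ (Set.univ ×ˢ Set.univ)) →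
      (∀ t ∈ Set.Icc (0:ℝ) T, ∀ u₁ v₁ u₂ v₂,
        ‖G t u₁ v₁ - G t u₂ v₂‖ ≤ L * (‖u₁ - u₂‖ + ‖v₁ - v₂‖)) →
      ∀ (φ₁ φ₂ x₁ x₂ : ℝ → EuclideanSpace ℝ (Fin n)),
      ContinuousOn φ₁ (Set.Icc (-τ) (0:ℝ)) →
      ContinuousOn φ₂ (Set.Icc (-τ) (0:ℝ)) →
      ContinuousOn x₁ (Set.Icc (-τ) T) → ContinuousOn x₂ (Set.Icc (-τ) T) →
      (∀ t ∈ Set.Icc (-τ) (0:ℝ), x₁ t = φ₁ t) →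
      (∀ t ∈ Set.Icc (-τ) (0:ℝ), x₂ t = φ₂ t) →
      (∀ t ∈ Set.Icc (0:ℝ) T, x₁ t =
        φ₁ 0 + (Real.Gamma α)⁻¹ • ∫ s in Set.Ioc (0:ℝ) t,
          ((t - s) ^ (α - 1)) • G s (x₁ s) (x₁ (s - τ))) →
      (∀ t ∈ Set.Icc (0:ℝ) T, x₂ t =
        φ₂ 0 + (Real.Gamma α)⁻¹ • ∫ s in Set.Ioc (0:ℝ) t,
          ((t - s) ^ (α - 1)) • G s (x₂ s) (x₂ (s - τ))) →
      (⨆ t : Set.Icc (0:ℝ) T, ‖x₁ t - x₂ t‖) ≤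
        M * ⨆ θ : Set.Icc (-τ) (0:ℝ), ‖φ₁ θ - φ₂ θ‖ :=
  continuous_dependence_on_history_general T τ α L hτ hα
end
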